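/- Let (Xₙ)ₙ be i.i.d. positive random variables whose common distribution function Q is regularly varying at 0 with index γ > 0, and choose constants aₙ > 0 with n·Q(1/aₙ) → 1. Then aₙ·min(X₁,…,Xₙ) converges in distribution as n → ∞ to the Weibull-type law 𝒢_γ(x) = 1 − exp(−x^γ), x > 0. -/

import Mathlib

/-!
By independence, `P(aₙ · min Xᵢ ≤ x) = 1 - (1 - Q(x/aₙ))ⁿ`. Since `n·Q(1/aₙ) → 1` forces
`1/aₙ ↓ 0`, regular variation gives `n·Q(x/aₙ) = n·Q(1/aₙ) · Q(x/aₙ)/Q(1/aₙ) → x^γ`, and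
`(1 - cₙ/n)ⁿ → exp(-c)` whenever `cₙ → c`.
-/

open MeasureTheory ProbabilityTheory Real Filter Topology Set
open scoped ENNReal

/-- A function `F` is regularly varying at `0` with index `γ`. -/
def RegVarAt0 (F : ℝ → ℝ) (γ : ℝ) : Prop :=
  ∀ t : ℝ, 0 < t →
    Filter.Tendsto (fun x => F (t * x) / F x) (nhdsWithin 0 (Set.Ioi 0)) (nhds (t ^ γ))

namespace RegVarAt0

variable {F : ℝ → ℝ} {γ : ℝ}

lemma eventually_ne_zero (hF : RegVarAt0 F γ) : ∀ᶠ y in 𝓝[>] 0, F y ≠ 0 := by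
  -- `F y / F y → 1`, whereas `0 / 0 = 0`
  filter_upwards [(hF 1 one_pos).eventually_ne (one_rpow γ ▸ one_ne_zero)] with y hy hFy
  simp [hFy] at hy

lemma pos_of_monotone (hF : RegVarAt0 F γ) (hmono : Monotone F) (hnonneg : ∀ y, 0 ≤ F y)
    {u : ℝ} (hu : 0 < u) : 0 < F u := by
  obtain ⟨y, hy, hyu⟩ := (hF.eventually_ne_zero.and (Ioo_mem_nhdsGT hu)).exists
  exact ((hnonneg y).lt_of_ne' hy).trans_le (hmono hyu.2.le)

lemma tendsto_mul_comp_const_mul {α : Type*} {l : Filter α} (hF : RegVarAt0 F γ)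
    {u c : α → ℝ} (hu : Tendsto u l (𝓝[>] 0)) (hc : Tendsto (fun i => c i * F (u i)) l (𝓝 1))
    {t : ℝ} (ht : 0 < t) : Tendsto (fun i => c i * F (t * u i)) l (𝓝 (t ^ γ)) := by
  have hlim := ((hF t ht).comp hu).mul hc
  rw [mul_one] at hlim
  refine hlim.congr' ?_
  filter_upwards [hu.eventually hF.eventually_ne_zero] with i hi
  simp only [Function.comp_apply]
  field_simp

end RegVarAt0

lemma Monotone.tendsto_nhdsGT_zero_of_tendsto_comp {α : Type*} {l : Filter α} {F : ℝ → ℝ}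
    (hmono : Monotone F) (hpos : ∀ y, 0 < y → 0 < F y) {u : α → ℝ} (hu : ∀ i, 0 < u i)
    (hFu : Tendsto (fun i => F (u i)) l (𝓝 0)) : Tendsto u l (𝓝[>] 0) := by
  refine tendsto_nhdsWithin_iff.2 ⟨tendsto_order.2 ⟨fun b hb => ?_, fun b hb => ?_⟩,
    .of_forall hu⟩
  · exact .of_forall fun i => hb.trans (hu i)
  · filter_upwards [hFu.eventually_lt_const (hpos b hb)] with i hi
    exact hmono.reflect_lt hi

namespace ProbabilityTheory.iIndepFun

variable {Ω ι : Type*} [MeasurableSpace Ω] {P : Measure Ω} {X : ι → Ω → ℝ} {i₀ : ι}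

lemma measure_forall_lt_eq_pow (hindep : iIndepFun X P) (hmeas : ∀ i, Measurable (X i))
    (hident : ∀ i, P.map (X i) = P.map (X i₀)) (s : Finset ι) (t : ℝ) :
    P {ω | ∀ i ∈ s, t < X i ω} = P {ω | t < X i₀ ω} ^ s.card := by
  have hsame : ∀ i, P (X i ⁻¹' Ioi t) = P (X i₀ ⁻¹' Ioi t) := fun i => by
    rw [← Measure.map_apply (hmeas i) measurableSet_Ioi, hident i,
      Measure.map_apply (hmeas i₀) measurableSet_Ioi]
  have hinter : {ω | ∀ i ∈ s, t < X i ω} = ⋂ i ∈ s, X i ⁻¹' Ioi t := by ext; simp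
  rw [hinter, hindep.meas_biInter fun i _ => ⟨Ioi t, measurableSet_Ioi, rfl⟩,
    Finset.prod_congr rfl fun i _ => hsame i, Finset.prod_const]
  rfl

lemma measureReal_inf'_le [IsProbabilityMeasure P] (hindep : iIndepFun X P)
    (hmeas : ∀ i, Measurable (X i)) (hident : ∀ i, P.map (X i) = P.map (X i₀))
    (s : Finset ι) (hs : s.Nonempty) (t : ℝ) :
    P.real {ω | s.inf' hs (fun i => X i ω) ≤ t} =
      1 - (1 - P.real {ω | X i₀ ω ≤ t}) ^ s.card := by
  have hmin : {ω | s.inf' hs (fun i => X i ω) ≤ t} = {ω | ∀ i ∈ s, t < X i ω}ᶜ := by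
    ext; simp [← not_lt, Finset.lt_inf'_iff]
  have hmeas_min : MeasurableSet {ω | ∀ i ∈ s, t < X i ω} := by
    simpa only [Set.ofPred_forall] using
      Finset.measurableSet_biInter s fun i _ => measurableSet_lt measurable_const (hmeas i)
  have htail : P.real {ω | t < X i₀ ω} = 1 - P.real {ω | X i₀ ω ≤ t} := by
    rw [← probReal_compl_eq_one_sub (measurableSet_le (hmeas i₀) measurable_const)]
    congr 1; ext; simp
  rw [hmin, probReal_compl_eq_one_sub hmeas_min, measureReal_def,
    hindep.measure_forall_lt_eq_pow hmeas hident, ENNReal.toReal_pow, ← measureReal_def, htail]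

end ProbabilityTheory.iIndepFun

theorem minima_weibull_limit_general
    {Ω : Type*} [MeasurableSpace Ω] (P : Measure Ω) [IsProbabilityMeasure P]
    (γ : ℝ)
    (X : ℕ → Ω → ℝ) (hmeas : ∀ n, Measurable (X n))
    -- the `Xₙ` are i.i.d. and positive
    (hindep : iIndepFun X P)
    (hident : ∀ n, Measure.map (X n) P = Measure.map (X 0) P)
    -- `Q` is the common distribution function, regularly varying at 0 with index `γ`
    (Q : ℝ → ℝ) (hQ : ∀ x, Q x = (P {ω | X 0 ω ≤ x}).toReal)
    (hQrv : RegVarAt0 Q γ)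
    (a : ℕ → ℝ) (ha : ∀ n, 0 < a n)
    (han : Filter.Tendsto (fun n : ℕ => (n : ℝ) * Q (1 / a n)) Filter.atTop (nhds 1)) :
    ∀ x : ℝ, 0 < x →
      Filter.Tendsto
        (fun n => (P {ω | a (n + 1) *
          (Finset.range (n + 1)).inf' Finset.nonempty_range_add_one (fun i => X i ω)
            ≤ x}).toReal)
        Filter.atTop (nhds (1 - Real.exp (-(x ^ γ)))) := by
  intro x hx
  have hQ_mono : Monotone Q := fun u v huv => by
    simp only [hQ]
    exact measureReal_mono fun ω hω => le_trans hω huv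
  have hQ_pos : ∀ u, 0 < u → 0 < Q u := fun u hu =>
    hQrv.pos_of_monotone hQ_mono (fun _ => by rw [hQ]; exact ENNReal.toReal_nonneg) hu
  have hQa : Tendsto (fun n => Q (1 / a n)) atTop (𝓝 0) := by
    refine (han.div_atTop tendsto_natCast_atTop_atTop).congr' ?_
    filter_upwards [eventually_ne_atTop 0] with n hn
    field_simp
  have ha_inv : Tendsto (fun n => 1 / a n) atTop (𝓝[>] 0) :=
    hQ_mono.tendsto_nhdsGT_zero_of_tendsto_comp hQ_pos (fun n => one_div_pos.2 (ha n)) hQa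
  have hpow : Tendsto (fun n : ℕ => (1 + -Q (x / a n)) ^ n) atTop (𝓝 (exp (-(x ^ γ)))) := by
    refine Real.tendsto_one_add_pow_exp_of_tendsto ?_
    simpa only [mul_neg, mul_one_div] using (hQrv.tendsto_mul_comp_const_mul ha_inv han hx).neg
  have hmin : ∀ n, (P {ω | a (n + 1) *
      (Finset.range (n + 1)).inf' Finset.nonempty_range_add_one (fun i => X i ω) ≤ x}).toReal =
        1 - (1 + -Q (x / a (n + 1))) ^ (n + 1) := fun n => by
    simp_rw [← le_div_iff₀' (ha (n + 1)), ← measureReal_def,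
      hindep.measureReal_inf'_le hmeas hident, hQ, measureReal_def, Finset.card_range,
      ← sub_eq_add_neg]
  simp_rw [hmin]
  exact (tendsto_const_nhds.sub hpow).comp (tendsto_add_atTop_nat 1)

theorem minima_weibull_limit
    {Ω : Type*} [MeasurableSpace Ω] (P : Measure Ω) [IsProbabilityMeasure P]
    (γ : ℝ) (hγ : 0 < γ)
    (X : ℕ → Ω → ℝ) (hmeas : ∀ n, Measurable (X n))
    -- the `Xₙ` are i.i.d. and positive
    (hindep : iIndepFun X P)
    (hident : ∀ n, Measure.map (X n) P = Measure.map (X 0) P)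
    (hpos : ∀ n, ∀ᵐ ω ∂P, 0 < X n ω)
    -- `Q` is the common distribution function, regularly varying at 0 with index `γ`
    (Q : ℝ → ℝ) (hQ : ∀ x, Q x = (P {ω | X 0 ω ≤ x}).toReal)
    (hQrv : RegVarAt0 Q γ)
    (a : ℕ → ℝ) (ha : ∀ n, 0 < a n)
    (han : Filter.Tendsto (fun n : ℕ => (n : ℝ) * Q (1 / a n)) Filter.atTop (nhds 1)) :
    ∀ x : ℝ, 0 < x →
      Filter.Tendsto
        (fun n => (P {ω | a (n + 1) *
          (Finset.range (n + 1)).inf' Finset.nonempty_range_add_one (fun i => X i ω)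
            ≤ x}).toReal)
        Filter.atTop (nhds (1 - Real.exp (-(x ^ γ)))) :=
  minima_weibull_limit_general P γ X hmeas hindep hident Q hQ hQrv a ha han
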